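/- Let k ≥ 2 and ℓ = 2. Define a coloring c on the vertices of ST^2_k by letting c(v) be the unique position i ≠ 0 with v i = v 0. Then for every vertex v, the values of c on the closed neighborhood of v (v together with its (k−1)·2 neighbors) are pairwise distinct, and these 2k−1 values comprise all positions i ∈ Fin (2k) with i ≠ 0. -/
import Mathlib


/-- An ℓ-set permutation: a string of length `k * l` over the alphabet `Fin k`
in which every symbol occurs exactly `l` times. -/
abbrev LSetPerm (k l : ℕ) : Type :=
  {v : Fin (k * l) → Fin k // ∀ j : Fin k, (Finset.univ.filter fun x => v x = j).card = l}

/-- The star ℓ-set transposition graph `ST^ℓ_k`: vertices are the ℓ-set permutations,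
with `v` adjacent to `w` iff `w` is obtained from `v` by transposing the first entry
with an entry of differing value. -/
def STGraph (k l : ℕ) [NeZero (k * l)] : SimpleGraph (LSetPerm k l) :=
  SimpleGraph.fromRel fun v w =>
    ∃ h : Fin (k * l), h ≠ 0 ∧ v.1 h ≠ v.1 0 ∧ w.1 = v.1 ∘ (Equiv.swap 0 h)

/-- Precomposition with a permutation preserves the ℓ-set property. -/
lemma LSetPerm.comp_perm (k l : ℕ) (v : LSetPerm k l) (e : Equiv.Perm (Fin (k * l))) :
    ∀ j : Fin k, (Finset.univ.filter fun x => (v.1 ∘ e) x = j).card = l := by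
  intro j
  exact (Finset.card_equiv e (by simp)).trans (v.2 j)

/-- For `ℓ = 2`, no value is attained at three distinct positions. -/
lemma three_distinct (k : ℕ) (v : LSetPerm k 2) {a b d : Fin (k * 2)}
    (hab : a ≠ b) (had : a ≠ d) (hbd : b ≠ d)
    (h1 : v.1 a = v.1 b) (h2 : v.1 a = v.1 d) : False := by
  have h2' := v.2 (v.1 a)
  have hsub : ({a, b, d} : Finset (Fin (k * 2))) ⊆
      Finset.univ.filter (fun x => v.1 x = v.1 a) := by
    intro x hx
    simp only [Finset.mem_insert, Finset.mem_singleton] at hx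
    simp only [Finset.mem_filter, Finset.mem_univ, true_and]
    rcases hx with rfl | rfl | rfl
    · rfl
    · exact h1.symm
    · exact h2.symm
  have hcard : ({a, b, d} : Finset (Fin (k * 2))).card = 3 := by
    rw [Finset.card_insert_of_notMem (by simp [hab, had]),
      Finset.card_insert_of_notMem (by simp [hbd]), Finset.card_singleton]
  have := Finset.card_le_card hsub
  omega

/-- Every position has a partner with the same value. -/
lemma exists_partner (k : ℕ) (v : LSetPerm k 2) (i : Fin (k * 2)) :
    ∃ h, h ≠ i ∧ v.1 h = v.1 i := by
  have h2 := v.2 (v.1 i)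
  obtain ⟨a, ha, b, hb, hab⟩ := Finset.one_lt_card.mp (by rw [h2]; norm_num)
  simp only [Finset.mem_filter, Finset.mem_univ, true_and] at ha hb
  by_cases hai : a = i
  · exact ⟨b, by rw [← hai]; exact fun e => hab e.symm, hb⟩
  · exact ⟨a, hai, ha⟩

lemma mem_nbhd (k : ℕ) [NeZero (k * 2)] (v w : LSetPerm k 2) :
    w ∈ (STGraph k 2).neighborSet v ↔
      ∃ h : Fin (k * 2), h ≠ 0 ∧ v.1 h ≠ v.1 0 ∧ w.1 = v.1 ∘ (Equiv.swap 0 h) := by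
  constructor
  · intro hw
    rw [SimpleGraph.mem_neighborSet, STGraph, SimpleGraph.fromRel_adj] at hw
    obtain ⟨hne, hrel | hrel⟩ := hw
    · exact hrel
    · obtain ⟨h, h0, hval, heq⟩ := hrel
      refine ⟨h, h0, ?_, ?_⟩
      · have h1 : v.1 h = w.1 0 := by rw [heq]; simp
        have h2 : v.1 0 = w.1 h := by rw [heq]; simp
        rw [h1, h2]
        exact fun e => hval e.symm
      · rw [heq]
        funext x
        simp [Equiv.swap_apply_self]
  · rintro ⟨h, h0, hval, heq⟩
    rw [SimpleGraph.mem_neighborSet, STGraph, SimpleGraph.fromRel_adj]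
    refine ⟨?_, Or.inl ⟨h, h0, hval, heq⟩⟩
    intro hvw
    apply hval
    have h1 : w.1 0 = v.1 h := by rw [heq]; simp
    rw [← h1, ← hvw]

/-- for `ℓ = 2`, color each vertex `v` by the unique position `i ≠ 0`
with `v i = v 0`. Then on each closed neighborhood the colors are pairwise distinct
and comprise all `2k-1` positions `i ≠ 0`. -/
theorem ST_vertex_coloring_closed_nbhd (k : ℕ) (hk : 2 ≤ k) :
    letI : NeZero (k * 2) := ⟨Nat.mul_ne_zero (by omega) (by omega)⟩
    ∀ c : LSetPerm k 2 → Fin (k * 2),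
      (∀ v : LSetPerm k 2, c v ≠ 0 ∧ v.1 (c v) = v.1 0) →
      ∀ v : LSetPerm k 2,
        Set.InjOn c (insert v ((STGraph k 2).neighborSet v)) ∧
        c '' (insert v ((STGraph k 2).neighborSet v)) = {i : Fin (k * 2) | i ≠ 0} := by
  intro c hc v
  haveI : NeZero (k * 2) := ⟨Nat.mul_ne_zero (by omega) (by omega)⟩
  -- uniqueness of the color position
  have uniq : ∀ (u : LSetPerm k 2) (i : Fin (k * 2)), i ≠ 0 → u.1 i = u.1 0 → i = c u := by
    intro u i hi hval
    by_contra hne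
    exact three_distinct k u (a := (0 : Fin (k * 2))) (b := i) (d := c u)
      (fun e => hi e.symm) (fun e => (hc u).1 e.symm) hne hval.symm (hc u).2.symm
  -- key facts about the color of a neighbor constructed from position h
  have nbr_color : ∀ (w : LSetPerm k 2) (h : Fin (k * 2)), h ≠ 0 → v.1 h ≠ v.1 0 →
      w.1 = v.1 ∘ (Equiv.swap 0 h) → c w ≠ h ∧ v.1 (c w) = v.1 h := by
    intro w h h0 hval heq
    have hw0 : w.1 0 = v.1 h := by rw [heq]; simp
    have hwh : w.1 h = v.1 0 := by rw [heq]; simp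
    have hcwh : c w ≠ h := by
      intro e
      have := (hc w).2
      rw [e, hwh, hw0] at this
      exact hval this.symm
    have hfix : w.1 (c w) = v.1 (c w) := by
      rw [heq]
      simp only [Function.comp_apply]
      rw [Equiv.swap_apply_of_ne_of_ne (hc w).1 hcwh]
    refine ⟨hcwh, ?_⟩
    rw [← hfix, (hc w).2, hw0]
  constructor
  · -- injectivity
    intro x hx y hy hcxy
    rcases Set.mem_insert_iff.mp hx with rfl | hxn
    · rcases Set.mem_insert_iff.mp hy with rfl | hyn
      · rfl
      · obtain ⟨h, h0, hval, heq⟩ := (mem_nbhd k x y).mp hyn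
        obtain ⟨_, hvy⟩ := nbr_color y h h0 hval heq
        rw [← hcxy] at hvy
        rw [(hc x).2] at hvy
        exact absurd hvy.symm hval
    · rcases Set.mem_insert_iff.mp hy with rfl | hyn
      · obtain ⟨h, h0, hval, heq⟩ := (mem_nbhd k y x).mp hxn
        obtain ⟨_, hvx⟩ := nbr_color x h h0 hval heq
        rw [hcxy] at hvx
        rw [(hc y).2] at hvx
        exact absurd hvx.symm hval
      · obtain ⟨h, h0, hval, heq⟩ := (mem_nbhd k v x).mp hxn
        obtain ⟨h', h0', hval', heq'⟩ := (mem_nbhd k v y).mp hyn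
        obtain ⟨hcxh, hvx⟩ := nbr_color x h h0 hval heq
        obtain ⟨hcyh', hvy⟩ := nbr_color y h' h0' hval' heq'
        by_cases hhh : h = h'
        · subst hhh
          apply Subtype.ext
          rw [heq, heq']
        · exfalso
          rw [hcxy] at hcxh hvx
          exact three_distinct k v (a := c y) (b := h) (d := h') hcxh hcyh' hhh hvx hvy
  · -- image is exactly the nonzero positions
    ext i
    simp only [Set.mem_image, Set.mem_setOf_eq]
    constructor
    · rintro ⟨u, _, rfl⟩
      exact (hc u).1
    · intro hi
      by_cases hicv : i = c v
      · exact ⟨v, Set.mem_insert _ _, hicv.symm⟩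
      · have hvi : v.1 i ≠ v.1 0 := fun e => hicv (uniq v i hi e)
        obtain ⟨h, hhi, hval⟩ := exists_partner k v i
        have hh0 : h ≠ 0 := by
          intro e
          rw [e] at hval
          exact hvi hval.symm
        have hvh : v.1 h ≠ v.1 0 := by rw [hval]; exact hvi
        set w : LSetPerm k 2 := ⟨v.1 ∘ (Equiv.swap 0 h), LSetPerm.comp_perm k 2 v _⟩ with hw
        have hwmem : w ∈ (STGraph k 2).neighborSet v := (mem_nbhd k v w).mpr ⟨h, hh0, hvh, rfl⟩
        have hwi : w.1 i = w.1 0 := by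
          show v.1 (Equiv.swap 0 h i) = v.1 (Equiv.swap 0 h 0)
          rw [Equiv.swap_apply_of_ne_of_ne hi (Ne.symm hhi), Equiv.swap_apply_left]
          exact hval.symm
        exact ⟨w, Set.mem_insert_of_mem _ hwmem, (uniq w i hi hwi).symm⟩
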